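/- arXiv:2009.12310 — 9 statements merged into one kernel-verified Lean document; each statement's English description precedes it below -/
import Mathlib

section
/- Let F be a finite field with q elements, q odd. Then the number of matrices A ∈ Ũ₃(F) satisfying A² = 1 equals 3q² + 1. -/
open Matrix

/-- `3 × 3` matrices over `F`. -/
abbrev M3 (F : Type*) := Matrix (Fin 3) (Fin 3) F

/-- Membership in the group `Ũ₃(F)` of upper triangular `3 × 3` matrices
`[[a,b,c],[0,d,e],[0,0,1]]` with `a, d ≠ 0` and `(3,3)`-entry equal to `1`. -/
def inU3 {F : Type*} [Field F] (A : M3 F) : Prop :=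
  A 0 0 ≠ 0 ∧ A 1 1 ≠ 0 ∧ A 2 2 = 1 ∧ A 1 0 = 0 ∧ A 2 0 = 0 ∧ A 2 1 = 0

def mk3 {F : Type*} [Field F] (a b c d e : F) : M3 F := !![a,b,c; 0,d,e; 0,0,1]

lemma sq_mk3 {F : Type*} [Field F] (a b c d e : F) :
    (mk3 a b c d e) ^ 2 = mk3 (a*a) (a*b+b*d) (a*c+b*e+c) (d*d) (d*e+e) := by
  rw [pow_two]
  ext i j
  fin_cases i <;> fin_cases j <;>
    simp [mk3, Matrix.mul_apply, Fin.sum_univ_succ, Matrix.vecHead, Matrix.vecTail] <;> ring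

lemma eq_mk3 {F : Type*} [Field F] (A : M3 F) (h : inU3 A) :
    A = mk3 (A 0 0) (A 0 1) (A 0 2) (A 1 1) (A 1 2) := by
  obtain ⟨-, -, h3, h4, h5, h6⟩ := h
  ext i j
  fin_cases i <;> fin_cases j <;> simp_all [mk3, Matrix.vecHead, Matrix.vecTail]

lemma mk3_inj {F : Type*} [Field F] {a b c d e a' b' c' d' e' : F}
    (h : mk3 a b c d e = mk3 a' b' c' d' e') :
    a = a' ∧ b = b' ∧ c = c' ∧ d = d' ∧ e = e' := by
  have h00 := congrFun (congrFun h 0) 0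
  have h01 := congrFun (congrFun h 0) 1
  have h02 := congrFun (congrFun h 0) 2
  have h11 := congrFun (congrFun h 1) 1
  have h12 := congrFun (congrFun h 1) 2
  simp [mk3] at h00 h01 h02 h11 h12
  tauto

lemma one_eq_mk3 {F : Type*} [Field F] : (1 : M3 F) = mk3 1 0 0 1 0 := by
  ext i j; fin_cases i <;> fin_cases j <;> simp [mk3, Matrix.vecHead, Matrix.vecTail]

lemma inU3_mk3 {F : Type*} [Field F] {a d : F} (b c e : F) (ha : a ≠ 0) (hd : d ≠ 0) :
    inU3 (mk3 a b c d e) := by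
  refine ⟨?_, ?_, ?_, ?_, ?_, ?_⟩ <;>
    simp [inU3, mk3, Matrix.vecHead, Matrix.vecTail, ha, hd]

theorem stmt_3 {F : Type*} [Field F] [Fintype F] (q : ℕ) (hq : Fintype.card F = q)
    (hodd : Odd q) :
    Nat.card {A : M3 F // inU3 A ∧ A ^ 2 = 1} = 3 * q ^ 2 + 1 := by
  have h2 : (2:F) ≠ 0 := by
    intro h
    have h2' : ((2:ℕ):F) = 0 := by exact_mod_cast h
    have hd : ringChar F ∣ 2 := ringChar.dvd h2'
    have hchar : ringChar F = 2 :=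
      (Nat.prime_dvd_prime_iff_eq (CharP.char_is_prime F _) Nat.prime_two).mp hd
    have := FiniteField.even_card_of_char_two hchar
    obtain ⟨k, hk⟩ := hodd
    omega
  have h1 : (1:F) ≠ 0 := one_ne_zero
  have hn1 : (-1:F) ≠ 0 := neg_ne_zero.mpr one_ne_zero
  have hne : (1:F) ≠ -1 := by
    intro h; apply h2; linear_combination h
  -- the parametrizing map
  set g : Unit ⊕ (F × F) ⊕ (F × F) ⊕ (F × F) → {A : M3 F // inU3 A ∧ A ^ 2 = 1} :=
    fun x => match x with
    | .inl _ => ⟨mk3 1 0 0 1 0, inU3_mk3 _ _ _ h1 h1, by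
        rw [sq_mk3, one_eq_mk3]; norm_num⟩
    | .inr (.inl (b, e)) => ⟨mk3 1 b (-(b*e)/2) (-1) e, inU3_mk3 _ _ _ h1 hn1, by
        rw [sq_mk3, one_eq_mk3]; congr 1 <;> field_simp <;> ring⟩
    | .inr (.inr (.inl (b, c))) => ⟨mk3 (-1) b c 1 0, inU3_mk3 _ _ _ hn1 h1, by
        rw [sq_mk3, one_eq_mk3]; norm_num⟩
    | .inr (.inr (.inr (c, e))) => ⟨mk3 (-1) 0 c (-1) e, inU3_mk3 _ _ _ hn1 hn1, by
        rw [sq_mk3, one_eq_mk3]; norm_num⟩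
    with hg
  have hbij : Function.Bijective g := by
    constructor
    · rintro (⟨⟩ | ⟨⟨b, e⟩ | ⟨b, c⟩ | ⟨c, e⟩⟩) (⟨⟩ | ⟨⟨b', e'⟩ | ⟨b', c'⟩ | ⟨c', e'⟩⟩) h <;>
        · have h' := mk3_inj (congrArg Subtype.val h)
          obtain ⟨e1, e2, e3, e4, e5⟩ := h'
          first
          | rfl
          | (exact absurd e1 hne) | (exact absurd e1.symm hne)
          | (exact absurd e4 hne) | (exact absurd e4.symm hne)
          | simp_all
    · rintro ⟨A, hU, hsq⟩
      have hA := eq_mk3 A hU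
      set a := A 0 0; set b := A 0 1; set c := A 0 2; set d := A 1 1; set e := A 1 2
      rw [hA, sq_mk3, one_eq_mk3] at hsq
      obtain ⟨q1, q2, q3, q4, q5⟩ := mk3_inj hsq
      rcases mul_self_eq_one_iff.mp q1 with ha | ha <;>
        rcases mul_self_eq_one_iff.mp q4 with hd | hd
      · -- a = 1, d = 1 : identity
        refine ⟨.inl (), ?_⟩
        have hb : b = 0 := by
          have : b * 2 = 0 := by rw [ha, hd] at q2; linear_combination q2
          exact (mul_eq_zero.mp this).resolve_right h2
        have he : e = 0 := by
          have : e * 2 = 0 := by rw [hd] at q5; linear_combination q5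
          exact (mul_eq_zero.mp this).resolve_right h2
        have hc : c = 0 := by
          have : c * 2 = 0 := by rw [ha, hb, he] at q3; linear_combination q3
          exact (mul_eq_zero.mp this).resolve_right h2
        apply Subtype.ext
        simp only [hg]
        rw [hA, ha, hb, hc, hd, he]
      · refine ⟨.inr (.inl (b, e)), ?_⟩
        apply Subtype.ext
        simp only [hg]
        have hc : -(b*e)/2 = c := by
          rw [ha] at q3
          field_simp
          linear_combination -q3
        rw [hA, ha, hd, hc]
      · refine ⟨.inr (.inr (.inl (b, c))), ?_⟩
        have he : e = 0 := by
          have : e * 2 = 0 := by rw [hd] at q5; linear_combination q5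
          exact (mul_eq_zero.mp this).resolve_right h2
        apply Subtype.ext
        simp only [hg]
        rw [hA, ha, hd, he]
      · refine ⟨.inr (.inr (.inr (c, e))), ?_⟩
        have hb : b = 0 := by
          have : b * (-2) = 0 := by rw [ha, hd] at q2; linear_combination q2
          rcases mul_eq_zero.mp this with h | h
          · exact h
          · exact absurd (by linear_combination -h) h2
        apply Subtype.ext
        simp only [hg]
        rw [hA, ha, hb, hd]
  rw [← Nat.card_congr (Equiv.ofBijective g hbij)]
  simp [Nat.card_eq_fintype_card, Fintype.card_prod, hq]
  ring
end

section
/- Let F be a finite field with q elements, q odd, and let r ≥ 2. Then (q−1)² divides the number of r-tuples (A₁, …, A_r) ∈ Ũ₃(F)^r satisfying A₁² A₂² ⋯ A_r² = 1. -/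
open Matrix

/-!
Let `T ≅ (Fˣ)²` be the diagonal torus of `Ũ₃(F)` and, for a solution `g` of `g₁² ⋯ g_r² = 1`,
let `S ≤ T` be the part of `T` centralizing every `gᵢ`. Then `T × S` acts on the solutions with
centralizer `S`: `t` by simultaneous conjugation, `z` by `g₁ ↦ z g₁, g₂ ↦ z⁻¹ g₂`, which preserves the
equation because `z` commutes with `g₁` and `g₂`. Conjugation does not change diagonal entries, so
`(t, z)` fixes `g` only if `z = 1` and `t ∈ S`. Hence every orbit has `|T| |S| / |S| = |T|`
elements, and `|T| = (q - 1)²` divides the number of solutions. The argument works in any finite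
group `G` with a commutative subgroup `T` mapping injectively to an abelian quotient of `G`.
-/

open Function MulAction

def prodSq {M : Type*} [Monoid M] {r : ℕ} (g : Fin r → M) : M :=
  (List.ofFn fun i => g i ^ 2).prod

lemma map_prodSq {M N F : Type*} [Monoid M] [Monoid N] [FunLike F M N] [MonoidHomClass F M N]
    (φ : F) {r : ℕ} (g : Fin r → M) : prodSq (fun i => φ (g i)) = φ (prodSq g) := by
  simp only [prodSq, map_list_prod, List.map_ofFn, comp_def, map_pow]

lemma card_prodSq_eq_one_of_injective {G M : Type*} [Monoid G] [Monoid M] {r : ℕ} (φ : G →* M)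
    (hφ : Injective φ) :
    Nat.card {g : Fin r → G // prodSq g = 1} =
      Nat.card {A : Fin r → M // (∀ i, A i ∈ Set.range φ) ∧ prodSq A = 1} := by
  refine Nat.card_eq_of_bijective
    (fun g => ⟨fun i => φ (g.1 i), fun i => ⟨_, rfl⟩, by rw [map_prodSq, g.2, map_one]⟩)
    ⟨fun g g' h => Subtype.ext (funext fun i => hφ (congrFun (congrArg Subtype.val h) i)), ?_⟩
  rintro ⟨A, hA, h1⟩
  obtain ⟨g, hg⟩ := Classical.axiomOfChoice hA
  refine ⟨⟨g, hφ ?_⟩, Subtype.ext (funext hg)⟩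
  rw [← map_prodSq, map_one, ← h1]
  exact congrArg prodSq (funext hg)

lemma prodSq_fin_succ_succ {M : Type*} [Monoid M] {n : ℕ} (g : Fin (n + 2) → M) :
    prodSq g = g 0 ^ 2 * (g 1 ^ 2 * prodSq fun i : Fin n => g i.succ.succ) := by
  simp only [prodSq, List.ofFn_succ, List.prod_cons, Fin.succ_zero_eq_one]

lemma dvd_card_of_forall_card_orbit_eq {H X : Type*} [Group H] [MulAction H X] [Finite X]
    {m : ℕ} (h : ∀ x : X, Nat.card (orbit H x) = m) : m ∣ Nat.card X := by
  have := Fintype.ofFinite (orbitRel.Quotient H X)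
  rw [Nat.card_congr (selfEquivSigmaOrbits H X), Nat.card_sigma]
  exact Finset.dvd_sum fun ω _ => (h _).symm ▸ dvd_rfl

lemma dvd_card_of_forall_dvd_card_fiber {X Y : Type*} [Finite Y] [Finite X] (f : X → Y) {m : ℕ}
    (h : ∀ y, m ∣ Nat.card {x // f x = y}) : m ∣ Nat.card X := by
  have := Fintype.ofFinite Y
  rw [Nat.card_congr (Equiv.sigmaFiberEquiv f).symm, Nat.card_sigma]
  exact Finset.dvd_sum fun y _ => h y

section
variable {G T D : Type*} [Group G] [CommGroup T] [CommGroup D] {n : ℕ}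

def twist : T →* (Fin (n + 2) → T) :=
  MonoidHom.mulSingle (fun _ => T) 0 / MonoidHom.mulSingle (fun _ => T) 1

@[simp] lemma twist_zero (z : T) : twist z (0 : Fin (n + 2)) = z := by simp [twist]
@[simp] lemma twist_one (z : T) : twist z (1 : Fin (n + 2)) = z⁻¹ := by simp [twist]
@[simp] lemma twist_succ_succ (z : T) (i : Fin n) : twist z i.succ.succ = 1 := by
  simp [twist, Pi.mulSingle_eq_of_ne (Fin.succ_succ_ne_one i)]

variable (ι : T →* G)

def twistConj (p : T × T) (g : Fin (n + 2) → G) : Fin (n + 2) → G :=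
  fun i => ι (p.1 * twist p.2 i) * g i * (ι p.1)⁻¹

lemma twistConj_one (g : Fin (n + 2) → G) : twistConj ι 1 g = g := by
  funext i; simp [twistConj]

lemma twistConj_mul (p p' : T × T) (g : Fin (n + 2) → G) :
    twistConj ι (p * p') g = twistConj ι p (twistConj ι p' g) := by
  funext i
  simp only [twistConj, Prod.fst_mul, Prod.snd_mul, map_mul, _root_.mul_inv_rev, Pi.mul_apply,
    mul_assoc]
  rw [← mul_assoc (ι p'.1), ((Commute.all p'.1 (twist p.2 i)).map ι).eq, mul_assoc]

def tupleCentralizer (g : Fin (n + 2) → G) : Subgroup T :=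
  (Subgroup.centralizer (Set.range g)).comap ι

lemma mem_tupleCentralizer {g : Fin (n + 2) → G} {t : T} :
    t ∈ tupleCentralizer ι g ↔ ∀ i, Commute (ι t) (g i) := by
  simp [tupleCentralizer, Subgroup.mem_centralizer_iff, Commute, SemiconjBy, eq_comm]

lemma commute_mul_mul_inv_iff {a b c x : G} (hb : Commute a b) (hc : Commute a c) :
    Commute a (b * x * c⁻¹) ↔ Commute a x := by
  refine ⟨fun h => ?_, fun h => (hb.mul_right h).mul_right hc.inv_right⟩
  simpa [mul_assoc] using (hb.inv_right.mul_right h).mul_right hc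

lemma tupleCentralizer_twistConj (p : T × T) (g : Fin (n + 2) → G) :
    tupleCentralizer ι (twistConj ι p g) = tupleCentralizer ι g := by
  ext w
  simp only [mem_tupleCentralizer, twistConj]
  exact forall_congr' fun i =>
    commute_mul_mul_inv_iff ((Commute.all w _).map ι) ((Commute.all w _).map ι)

lemma prodSq_twist (z : T) (g : Fin (n + 2) → G) (h0 : Commute (ι z) (g 0))
    (h1 : Commute (ι z) (g 1)) : prodSq (fun i => ι (twist z i) * g i) = prodSq g := by
  rw [prodSq_fin_succ_succ, prodSq_fin_succ_succ]
  simp only [twist_zero, twist_one, twist_succ_succ, map_one, one_mul, map_inv]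
  rw [h0.mul_pow, h1.inv_left.mul_pow]
  simp only [mul_assoc]
  rw [← mul_assoc (g 0 ^ 2), ← (h0.inv_left.pow_pow 2 2).eq]
  group

lemma prodSq_twistConj {p : T × T} {g : Fin (n + 2) → G} (hz : p.2 ∈ tupleCentralizer ι g) :
    prodSq (twistConj ι p g) = ι p.1 * prodSq g * (ι p.1)⁻¹ := by
  have hconj : twistConj ι p g = fun i => MulAut.conj (ι p.1) (ι (twist p.2 i) * g i) := by
    funext i
    simp [twistConj, MulAut.conj_apply, mul_assoc]
  rw [hconj, map_prodSq, prodSq_twist ι _ _ ((mem_tupleCentralizer ι).1 hz 0)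
    ((mem_tupleCentralizer ι).1 hz 1), MulAut.conj_apply]

lemma twistConj_eq_self_iff (δ : G →* D) (hδι : Injective (δ.comp ι)) {p : T × T}
    {g : Fin (n + 2) → G} : twistConj ι p g = g ↔ p.2 = 1 ∧ p.1 ∈ tupleCentralizer ι g := by
  constructor
  · intro h
    -- `δ` has abelian target, so it forgets the conjugation in the `0`th entry
    have hz : p.2 = 1 := by
      apply hδι
      have := congrArg δ (congrFun h 0)
      simp only [twistConj, twist_zero, map_mul, map_inv] at this
      rw [mul_right_comm, mul_right_comm (δ (ι p.1)), mul_inv_cancel, one_mul, mul_eq_right] at this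
      simpa using this
    refine ⟨hz, (mem_tupleCentralizer ι).2 fun i => ?_⟩
    have := congrFun h i
    simp only [twistConj, hz, map_one, Pi.one_apply, mul_one] at this
    exact mul_inv_eq_iff_eq_mul.1 this
  · rintro ⟨hz, ht⟩
    funext i
    simp [twistConj, hz, ((mem_tupleCentralizer ι).1 ht i).eq]

theorem card_dvd_card_fiber_tupleCentralizer [Finite G] (δ : G →* D)
    (hδι : Injective (δ.comp ι)) (S : Subgroup T) :
    Nat.card T ∣
      Nat.card {x : {g : Fin (n + 2) → G // prodSq g = 1} // tupleCentralizer ι x.1 = S} := by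
  let _ : MulAction (T × S) {x : {g : Fin (n + 2) → G // prodSq g = 1} //
      tupleCentralizer ι x.1 = S} :=
    { smul := fun p x => ⟨⟨twistConj ι (p.1, p.2) x.1.1, by
          rw [prodSq_twistConj ι (x.2.symm ▸ p.2.2), x.1.2, mul_one, mul_inv_cancel]⟩,
        (tupleCentralizer_twistConj ι _ _).trans x.2⟩
      one_smul := fun x => Subtype.ext (Subtype.ext (twistConj_one ι _))
      mul_smul := fun p p' x =>
        Subtype.ext (Subtype.ext (twistConj_mul ι (p.1, p.2) (p'.1, p'.2) _)) }
  have : Finite T := Finite.of_injective (β := G) ι (hδι.of_comp (f := δ))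
  refine dvd_card_of_forall_card_orbit_eq (H := T × S) fun x => ?_
  have hstab : stabilizer (T × S) x = S.prod ⊥ := by
    ext ⟨t, z⟩
    have h := twistConj_eq_self_iff ι δ hδι (p := (t, (z : T))) (g := x.1.1)
    rw [x.2, OneMemClass.coe_eq_one, and_comm] at h
    rw [mem_stabilizer_iff, Subgroup.mem_prod, Subgroup.mem_bot, Subtype.ext_iff, Subtype.ext_iff]
    exact h
  have h := Nat.card_congr (orbitProdStabilizerEquivGroup (T × S) x)
  rw [Nat.card_prod, Nat.card_prod, hstab, Nat.card_congr (Subgroup.prodEquiv _ _).toEquiv,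
    Nat.card_prod, Subgroup.card_bot, mul_one] at h
  exact Nat.eq_of_mul_eq_mul_right Nat.card_pos h

theorem card_dvd_card_prodSq_eq_one [Finite G] (δ : G →* D) (hδι : Injective (δ.comp ι)) :
    Nat.card T ∣ Nat.card {g : Fin (n + 2) → G // prodSq g = 1} := by
  have : Finite T := Finite.of_injective (β := G) ι (hδι.of_comp (f := δ))
  exact dvd_card_of_forall_dvd_card_fiber
    (fun x : {g : Fin (n + 2) → G // prodSq g = 1} => tupleCentralizer ι x.1)
    (card_dvd_card_fiber_tupleCentralizer ι δ hδι)

end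

section U3
variable {F : Type*} [Field F]

lemma inU3_mul {A B : M3 F} (hA : inU3 A) (hB : inU3 B) : inU3 (A * B) := by
  obtain ⟨hA00, hA11, hA22, hA10, hA20, hA21⟩ := hA
  obtain ⟨hB00, hB11, hB22, hB10, hB20, hB21⟩ := hB
  simp [inU3, Matrix.mul_apply, Fin.sum_univ_three, *]

variable (F) in
def U3 : Submonoid (M3 F) where
  carrier := {A | inU3 A}
  mul_mem' := inU3_mul
  one_mem' := by simp [inU3]

def u3Inv (A : M3 F) : M3 F :=
  !![(A 0 0)⁻¹, -A 0 1 * (A 0 0)⁻¹ * (A 1 1)⁻¹,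
      (A 0 1 * A 1 2 - A 0 2 * A 1 1) * (A 0 0)⁻¹ * (A 1 1)⁻¹;
    0, (A 1 1)⁻¹, -A 1 2 * (A 1 1)⁻¹;
    0, 0, 1]

lemma inU3_u3Inv {A : M3 F} (hA : inU3 A) : inU3 (u3Inv A) := by
  simp [inU3, u3Inv, hA.1, hA.2.1]

lemma mul_u3Inv {A : M3 F} (hA : inU3 A) : A * u3Inv A = 1 := by
  obtain ⟨hA00, hA11, hA22, hA10, hA20, hA21⟩ := hA
  ext i j
  fin_cases i <;> fin_cases j <;>
    simp [u3Inv, Matrix.mul_apply, Fin.sum_univ_three, *] <;> field_simp <;> ring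

lemma isUnit_of_mem_U3 (A : U3 F) : IsUnit A :=
  isUnit_iff_exists.2 ⟨⟨u3Inv A, inU3_u3Inv A.2⟩, Subtype.ext (mul_u3Inv A.2),
    Subtype.ext (mul_eq_one_comm.1 (mul_u3Inv A.2))⟩

def U3.diag : U3 F →* F × F where
  toFun A := (A.1 0 0, A.1 1 1)
  map_one' := by simp
  map_mul' A B := by
    obtain ⟨-, -, -, hA10, -, -⟩ := A.2
    obtain ⟨-, -, -, hB10, hB20, hB21⟩ := B.2
    simp [Matrix.mul_apply, Fin.sum_univ_three, *]

def U3.torus : Fˣ × Fˣ →* U3 F where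
  toFun p := ⟨diagonal ![(p.1 : F), p.2, 1], by simp [U3, inU3]⟩
  map_one' := by ext i j; fin_cases i <;> fin_cases j <;> simp
  map_mul' p p' := by
    ext i j
    fin_cases i <;> fin_cases j <;> simp

def U3.diagUnits : (U3 F)ˣ →* Fˣ × Fˣ :=
  MulEquiv.prodUnits.toMonoidHom.comp (Units.map U3.diag)

lemma U3.diagUnits_comp_torus :
    U3.diagUnits.comp U3.torus.toHomUnits = MonoidHom.id (Fˣ × Fˣ) := by
  ext p <;> simp [U3.diagUnits, U3.diag, U3.torus, MulEquiv.prodUnits]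

lemma mem_range_U3_val_iff {A : M3 F} :
    A ∈ Set.range ((U3 F).subtype.comp (Units.coeHom (U3 F))) ↔ inU3 A :=
  ⟨fun ⟨u, hu⟩ => hu ▸ (u : U3 F).2, fun h => ⟨(isUnit_of_mem_U3 ⟨A, h⟩).unit, rfl⟩⟩

end U3

theorem stmt_6_general {F : Type*} [Field F] [Fintype F] (q : ℕ) (hq : Fintype.card F = q)
    (r : ℕ) (hr : 2 ≤ r) :
    (q - 1) ^ 2 ∣
      Nat.card {A : Fin r → M3 F //
        (∀ i, inU3 (A i)) ∧ (List.ofFn (fun i => (A i) ^ 2)).prod = 1} := by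
  obtain ⟨n, rfl⟩ : ∃ n, r = n + 2 := ⟨r - 2, by omega⟩
  have hcard : Nat.card (Fˣ × Fˣ) = (q - 1) ^ 2 := by
    rw [Nat.card_prod, Nat.card_units, Nat.card_eq_fintype_card, hq, sq]
  have hφ : Injective ((U3 F).subtype.comp (Units.coeHom (U3 F))) :=
    Subtype.val_injective.comp Units.val_injective
  have hcount := card_prodSq_eq_one_of_injective (r := n + 2) _ hφ
  simp only [mem_range_U3_val_iff] at hcount
  have hδι : Injective (U3.diagUnits.comp (U3.torus (F := F)).toHomUnits) := by
    rw [U3.diagUnits_comp_torus]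
    exact injective_id
  rw [← hcard]
  exact hcount ▸ card_dvd_card_prodSq_eq_one _ _ hδι

theorem stmt_6 {F : Type*} [Field F] [Fintype F] (q : ℕ) (hq : Fintype.card F = q)
    (hodd : Odd q) (r : ℕ) (hr : 2 ≤ r) :
    (q - 1) ^ 2 ∣
      Nat.card {A : Fin r → M3 F //
        (∀ i, inU3 (A i)) ∧ (List.ofFn (fun i => (A i) ^ 2)).prod = 1} :=
  stmt_6_general q hq r hr
end

section
/- Let r ≥ 1 and let (A₁, …, A_r) ∈ Ũ₃(ℂ)^r, with Aᵢ having entries [[aᵢ,bᵢ,cᵢ],[0,dᵢ,eᵢ],[0,0,1]]. Assume that: (i) it is not the case that cᵢ = eᵢ = 0 for all i; (ii) it is not the case that bᵢ = eᵢ = 0 for all i; and (iii) it is not the case that bᵢ = cᵢ = 0 for all i. If x, y ∈ ℂ^× are such that conjugation by the diagonal matrix diag(x, y, 1) fixes Aᵢ for every i (i.e. diag(x,y,1)·Aᵢ·diag(x,y,1)⁻¹ = Aᵢ for all i), then x = 1 and y = 1. In other words, the conjugation action of 𝔾_m × 𝔾_m on tuples outside D₁ ∪ D₂ ∪ D₃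 is free. -/
open Matrix

/-! Conjugation by `diag(x, y, 1)` multiplies the entries `b`, `c`, `e` of `A` by `x y⁻¹`, `x`
and `y` respectively, so a nonzero `b`, `c` or `e` forces `x = y`, `x = 1` or `y = 1`. Each of the
three hypotheses supplies one of two of these constraints, and any two of them pin down
`x = y = 1`. -/

theorem Matrix.mul_eq_one_of_diagonal_mul_mul_diagonal_eq {n R : Type*} [Fintype n]
    [DecidableEq n] [CommRing R] [IsDomain R] {d e : n → R} {A : Matrix n n R}
    (hA : diagonal d * A * diagonal e = A) {i j : n} (hij : A i j ≠ 0) :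
    d i * e j = 1 := by
  have h := congrFun (congrFun hA i) j
  rw [mul_diagonal, diagonal_mul] at h
  exact mul_right_cancel₀ hij (by linear_combination h)

theorem stmt_7_general (r : ℕ) (A : Fin r → M3 ℂ)
    (h1 : ¬ ∀ i, A i 0 2 = 0 ∧ A i 1 2 = 0)
    (h2 : ¬ ∀ i, A i 0 1 = 0 ∧ A i 1 2 = 0)
    (h3 : ¬ ∀ i, A i 0 1 = 0 ∧ A i 0 2 = 0)
    (x y : ℂ) (hy : y ≠ 0)
    (hfix : ∀ i, !![x, 0, 0; 0, y, 0; 0, 0, 1] * A i * !![x⁻¹, 0, 0; 0, y⁻¹, 0; 0, 0, 1] = A i) :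
    x = 1 ∧ y = 1 := by
  simp only [← diagonal_vec3] at hfix
  have hb : ∀ i, A i 0 1 ≠ 0 → x = y := fun i h =>
    (mul_inv_eq_one₀ hy).mp (mul_eq_one_of_diagonal_mul_mul_diagonal_eq (hfix i) h)
  have hc : ∀ i, A i 0 2 ≠ 0 → x = 1 := fun i h => by
    simpa using mul_eq_one_of_diagonal_mul_mul_diagonal_eq (hfix i) h
  have he : ∀ i, A i 1 2 ≠ 0 → y = 1 := fun i h => by
    simpa using mul_eq_one_of_diagonal_mul_mul_diagonal_eq (hfix i) h
  simp only [not_forall, not_and_or] at h1 h2 h3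
  obtain ⟨i, hci | hei⟩ := h1
  · have hx1 := hc i hci
    obtain ⟨j, hbj | hej⟩ := h2
    · exact ⟨hx1, (hb j hbj).symm.trans hx1⟩
    · exact ⟨hx1, he j hej⟩
  · have hy1 := he i hei
    obtain ⟨j, hbj | hcj⟩ := h3
    · exact ⟨(hb j hbj).trans hy1, hy1⟩
    · exact ⟨hc j hcj, hy1⟩

theorem stmt_7 (r : ℕ) (hr : 1 ≤ r) (A : Fin r → M3 ℂ) (hA : ∀ i, inU3 (A i))
    (h1 : ¬ ∀ i, A i 0 2 = 0 ∧ A i 1 2 = 0)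
    (h2 : ¬ ∀ i, A i 0 1 = 0 ∧ A i 1 2 = 0)
    (h3 : ¬ ∀ i, A i 0 1 = 0 ∧ A i 0 2 = 0)
    (x y : ℂ) (hx : x ≠ 0) (hy : y ≠ 0)
    (hfix : ∀ i, !![x, 0, 0; 0, y, 0; 0, 0, 1] * A i * !![x⁻¹, 0, 0; 0, y⁻¹, 0; 0, 0, 1] = A i) :
    x = 1 ∧ y = 1 :=
  stmt_7_general r A h1 h2 h3 x y hy hfix
end

section
/- Let t ∈ ℂ with t ≠ 0 and t ≠ 1. The conjugacy class of the diagonal matrix diag(1, t, 1) in the group Ũ₃(ℂ) is exactly the set of matrices [[1,b,c],[0,t,e],[0,0,1]] with c(t−1) = be. -/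
open Matrix

theorem stmt_13 (t : ℂ) (ht0 : t ≠ 0) (ht1 : t ≠ 1) :
    {B : M3 ℂ | ∃ P Q : M3 ℂ, inU3 P ∧ inU3 Q ∧ P * Q = 1 ∧
        B = P * !![1, 0, 0; 0, t, 0; 0, 0, 1] * Q} =
      {B : M3 ℂ | ∃ b c e : ℂ, c * (t - 1) = b * e ∧ B = !![1, b, c; 0, t, e; 0, 0, 1]} := by
  have ht1' : t - 1 ≠ 0 := sub_ne_zero.mpr ht1
  have ht1'' : 1 - t ≠ 0 := fun h => ht1 (by linear_combination -h)
  ext B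
  simp only [Set.mem_setOf_eq]
  constructor
  · rintro ⟨P, Q, ⟨hP0, hP1, hP2, hP10, hP20, hP21⟩, ⟨hQ0, hQ1, hQ2, hQ10, hQ20, hQ21⟩, hPQ, rfl⟩
    have E : ∀ i j, (P * Q) i j = (1 : M3 ℂ) i j := fun i j => by rw [hPQ]
    have E1 := E 0 0
    have E2 := E 0 1
    have E3 := E 0 2
    have E4 := E 1 1
    have E5 := E 1 2
    simp [Matrix.mul_apply, Fin.sum_univ_three, Matrix.one_apply, hP10, hP20, hP21,
      hQ10, hQ20, hQ21, hP2, hQ2] at E1 E2 E3 E4 E5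
    refine ⟨(t-1) * (P 0 1 * Q 1 1), (t-1) * (P 0 1 * Q 1 2), (t-1) * (P 1 1 * Q 1 2), ?_, ?_⟩
    · linear_combination (-(t-1)^2 * (P 0 1 * Q 1 2)) * E4
    · ext i j
      fin_cases i <;> fin_cases j <;>
        simp [Matrix.mul_apply, Fin.sum_univ_three, Matrix.vecHead, Matrix.vecTail,
          hP10, hP20, hP21, hQ10, hQ20, hQ21, hP2, hQ2]
      · linear_combination E1
      · linear_combination E2
      · linear_combination E3
      · linear_combination t * E4
      · linear_combination E5
  · rintro ⟨b, c, e, hrel, rfl⟩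
    have hc : c = b * e / (t - 1) := by field_simp; linear_combination hrel
    subst hc
    refine ⟨!![1, b/(t-1), 0; 0, 1, e/(1-t); 0, 0, 1],
      !![1, -(b/(t-1)), -(b*e)/((t-1)^2); 0, 1, -(e/(1-t)); 0, 0, 1], ?_, ?_, ?_, ?_⟩
    · exact ⟨one_ne_zero, one_ne_zero, rfl, rfl, rfl, rfl⟩
    · exact ⟨one_ne_zero, one_ne_zero, rfl, rfl, rfl, rfl⟩
    · ext i j
      fin_cases i <;> fin_cases j <;>
        simp [Matrix.mul_apply, Fin.sum_univ_three, Matrix.one_apply, Matrix.vecHead,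
          Matrix.vecTail] <;>
        field_simp <;> ring
    · ext i j
      fin_cases i <;> fin_cases j <;>
        simp [Matrix.mul_apply, Fin.sum_univ_three, Matrix.vecHead, Matrix.vecTail] <;>
        field_simp <;> ring
end

section
/- Let t ∈ ℂ with t ≠ 0 and t ≠ 1. The conjugacy class of the matrix [[1,0,1],[0,t,0],[0,0,1]] in the group Ũ₃(ℂ) is exactly the set of matrices [[1,b,c],[0,t,e],[0,0,1]] with c(t−1) ≠ be. -/
open Matrix

/-!
The condition `c (t - 1) ≠ b e` says that `B - 1` has rank two, i.e. that `B` is not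
diagonalisable. Conjugation by `[[a,b,c],[0,d,e],[0,0,1]]` keeps the diagonal `(1, t, 1)` and
multiplies the quantity `c (t - 1) - b e`, which is `t - 1` for `[[1,0,1],[0,t,0],[0,0,1]]`,
by `a`. Conversely every admissible `(b, c, e)` is reached by a conjugator with `d = 1`:
solve for its `b` and `e`, then for its `a`.
-/

namespace inU3

variable {F : Type*} [Field F]

theorem exists_eq {A : M3 F} (hA : inU3 A) :
    ∃ a b c d e : F, a ≠ 0 ∧ d ≠ 0 ∧ A = !![a, b, c; 0, d, e; 0, 0, 1] := by
  obtain ⟨ha, hd, h22, h10, h20, h21⟩ := hA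
  exact ⟨_, _, _, _, _, ha, hd, by simpa [h22, h10, h20, h21] using eta_fin_three A⟩

theorem of_ne_zero {a d : F} (b c e : F) (ha : a ≠ 0) (hd : d ≠ 0) :
    inU3 !![a, b, c; 0, d, e; 0, 0, 1] :=
  ⟨ha, hd, rfl, rfl, rfl, rfl⟩

end inU3

section UpperTriangular

variable {F : Type*} [Field F]

def upperTriInv (a b c d e : F) : M3 F :=
  !![a⁻¹, -b / (a * d), (b * e - c * d) / (a * d); 0, d⁻¹, -e / d; 0, 0, 1]

theorem inU3_upperTriInv {a d : F} (b c e : F) (ha : a ≠ 0) (hd : d ≠ 0) :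
    inU3 (upperTriInv a b c d e) :=
  inU3.of_ne_zero _ _ _ (inv_ne_zero ha) (inv_ne_zero hd)

theorem mul_upperTriInv {a d : F} (b c e : F) (ha : a ≠ 0) (hd : d ≠ 0) :
    !![a, b, c; 0, d, e; 0, 0, 1] * upperTriInv a b c d e = 1 := by
  rw [upperTriInv, mul_fin_three, one_fin_three]
  simp only [EmbeddingLike.apply_eq_iff_eq, vecCons_inj, and_true]
  refine ⟨⟨?_, ?_, ?_⟩, ⟨?_, ?_, ?_⟩, ?_, ?_, ?_⟩ <;> field_simp <;> ring

theorem conj_upperTriInv {a d : F} (b c e t : F) (ha : a ≠ 0) (hd : d ≠ 0) :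
    !![a, b, c; 0, d, e; 0, 0, 1] * !![1, 0, 1; 0, t, 0; 0, 0, 1] * upperTriInv a b c d e =
      !![1, b * (t - 1) / d, a - b * e * (t - 1) / d; 0, t, e * (1 - t); 0, 0, 1] := by
  rw [upperTriInv, mul_fin_three, mul_fin_three]
  simp only [EmbeddingLike.apply_eq_iff_eq, vecCons_inj, and_true]
  refine ⟨⟨?_, ?_, ?_⟩, ⟨?_, ?_, ?_⟩, ?_, ?_, ?_⟩ <;> field_simp <;> ring

end UpperTriangular

theorem stmt_14_general (t : ℂ) (ht1 : t ≠ 1) :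
    {B : M3 ℂ | ∃ P Q : M3 ℂ, inU3 P ∧ inU3 Q ∧ P * Q = 1 ∧
        B = P * !![1, 0, 1; 0, t, 0; 0, 0, 1] * Q} =
      {B : M3 ℂ | ∃ b c e : ℂ, c * (t - 1) ≠ b * e ∧ B = !![1, b, c; 0, t, e; 0, 0, 1]} := by
  have ht : t - 1 ≠ 0 := sub_ne_zero.mpr ht1
  ext B
  constructor
  · rintro ⟨P, Q, hP, -, hPQ, rfl⟩
    obtain ⟨a, b, c, d, e, ha, hd, rfl⟩ := hP.exists_eq
    obtain rfl : Q = upperTriInv a b c d e :=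
      left_inv_eq_right_inv (mul_eq_one_comm.mp hPQ) (mul_upperTriInv b c e ha hd)
    have hinv : (a - b * e * (t - 1) / d) * (t - 1) - b * (t - 1) / d * (e * (1 - t)) =
        a * (t - 1) := by
      field_simp
      ring
    exact ⟨_, _, _, sub_ne_zero.mp (hinv ▸ mul_ne_zero ha ht), conj_upperTriInv b c e t ha hd⟩
  · rintro ⟨b, c, e, hbce, rfl⟩
    have ha : c - b * e / (t - 1) ≠ 0 := by
      rwa [sub_ne_zero, ne_eq, eq_div_iff ht]
    refine ⟨_, _, inU3.of_ne_zero (b / (t - 1)) 0 (e / (1 - t)) ha one_ne_zero,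
      inU3_upperTriInv _ _ _ ha one_ne_zero, mul_upperTriInv _ _ _ ha one_ne_zero, ?_⟩
    rw [conj_upperTriInv _ _ _ _ ha one_ne_zero]
    have ht' : 1 - t ≠ 0 := sub_ne_zero.mpr ht1.symm
    simp only [EmbeddingLike.apply_eq_iff_eq, vecCons_inj, and_true, true_and]
    refine ⟨⟨?_, ?_⟩, ?_⟩
    · field_simp
    · field_simp
      ring
    · field_simp

theorem stmt_14 (t : ℂ) (ht0 : t ≠ 0) (ht1 : t ≠ 1) :
    {B : M3 ℂ | ∃ P Q : M3 ℂ, inU3 P ∧ inU3 Q ∧ P * Q = 1 ∧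
        B = P * !![1, 0, 1; 0, t, 0; 0, 0, 1] * Q} =
      {B : M3 ℂ | ∃ b c e : ℂ, c * (t - 1) ≠ b * e ∧ B = !![1, b, c; 0, t, e; 0, 0, 1]} :=
  stmt_14_general t ht1
end

section
/- Let t ∈ ℂ with t ≠ 0 and t ≠ 1. The conjugacy class of the diagonal matrix diag(t, 1, 1) in the group Ũ₃(ℂ) is exactly the set of matrices [[t,b,c],[0,1,0],[0,0,1]] with b, c ∈ ℂ arbitrary. -/
open Matrix

/-
`diag(t, 1, 1) = 1 + (t - 1) E₀₀`, so conjugating it by `P` gives `1 + (t - 1) (P e₀)(e₀ᵀ P⁻¹)`.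
For upper triangular `P` the column `P e₀` is a multiple of `e₀`, so every conjugate differs from
the identity only in its first row, and its `(0,0)` entry is still `t`. Conversely, conjugating by
the unipotent matrix with first row `(1, x, y)` produces first row `(t, (1 - t) x, (1 - t) y)`,
which covers all `(b, c)` once `t ≠ 1`.
-/

theorem Matrix.mul_one_add_smul_single_mul {n R : Type*} [Fintype n] [DecidableEq n]
    [CommRing R] {P Q : Matrix n n R} (hPQ : P * Q = 1) (i : n) (a : R) :
    P * (1 + a • single i i 1) * Q = 1 + a • vecMulVec (P.col i) (Q.row i) := by
  rw [mul_add, add_mul, mul_one, hPQ, mul_smul_comm, smul_mul_assoc,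
    single_eq_single_vecMulVec_single, mul_vecMulVec, vecMulVec_mul, mulVec_single_one,
    single_one_vecMul]

section

variable {R : Type*} [CommRing R]

def unipotentM3 (x y : R) : M3 R := !![1, x, y; 0, 1, 0; 0, 0, 1]

theorem unipotentM3_mul_unipotentM3_neg (x y : R) :
    unipotentM3 x y * unipotentM3 (-x) (-y) = 1 := by
  ext i j
  fin_cases i <;> fin_cases j <;> simp [unipotentM3, mul_apply, Fin.sum_univ_three, one_apply]

theorem unipotentM3_mul_diag_mul_unipotentM3_neg (t x y : R) :
    unipotentM3 x y * !![t, 0, 0; 0, 1, 0; 0, 0, 1] * unipotentM3 (-x) (-y) =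
      !![t, (1 - t) * x, (1 - t) * y; 0, 1, 0; 0, 0, 1] := by
  ext i j
  fin_cases i <;> fin_cases j <;> simp [unipotentM3, mul_apply, Fin.sum_univ_three] <;> ring

theorem diag_t_one_one_eq_one_add_smul_single (t : R) :
    !![t, 0, 0; 0, 1, 0; 0, 0, 1] = 1 + (t - 1) • single 0 0 1 := by
  ext i j
  fin_cases i <;> fin_cases j <;> simp [one_apply]

theorem mul_diag_t_one_one_mul_eq_of_mul_eq_one {P Q : M3 R} (hP10 : P 1 0 = 0)
    (hP20 : P 2 0 = 0) (hPQ : P * Q = 1) (t : R) :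
    P * !![t, 0, 0; 0, 1, 0; 0, 0, 1] * Q =
      !![t, (t - 1) * P 0 0 * Q 0 1, (t - 1) * P 0 0 * Q 0 2; 0, 1, 0; 0, 0, 1] := by
  have hQP : (Q * P) 0 0 = 1 := by rw [mul_eq_one_comm.mp hPQ, one_apply_eq]
  have hP00Q00 : P 0 0 * Q 0 0 = 1 := by
    simpa [mul_apply, Fin.sum_univ_three, hP10, hP20, mul_comm] using hQP
  rw [diag_t_one_one_eq_one_add_smul_single, mul_one_add_smul_single_mul hPQ]
  ext i j
  fin_cases i <;> fin_cases j <;>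
    simp [one_apply, vecMulVec_apply, hP10, hP20, mul_assoc, hP00Q00]

end

theorem inU3_unipotentM3 {F : Type*} [Field F] (x y : F) : inU3 (unipotentM3 x y) := by
  simp [inU3, unipotentM3]

theorem stmt_15_general (t : ℂ) (ht1 : t ≠ 1) :
    {B : M3 ℂ | ∃ P Q : M3 ℂ, inU3 P ∧ inU3 Q ∧ P * Q = 1 ∧
        B = P * !![t, 0, 0; 0, 1, 0; 0, 0, 1] * Q} =
      {B : M3 ℂ | ∃ b c : ℂ, B = !![t, b, c; 0, 1, 0; 0, 0, 1]} := by
  ext B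
  constructor
  · rintro ⟨P, Q, ⟨-, -, -, hP10, hP20, -⟩, -, hPQ, rfl⟩
    exact ⟨_, _, mul_diag_t_one_one_mul_eq_of_mul_eq_one hP10 hP20 hPQ t⟩
  · rintro ⟨b, c, rfl⟩
    have h1t : 1 - t ≠ 0 := sub_ne_zero.mpr ht1.symm
    refine ⟨_, _, inU3_unipotentM3 (b / (1 - t)) (c / (1 - t)), inU3_unipotentM3 _ _,
      unipotentM3_mul_unipotentM3_neg _ _, ?_⟩
    rw [unipotentM3_mul_diag_mul_unipotentM3_neg, mul_div_cancel₀ b h1t, mul_div_cancel₀ c h1t]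

theorem stmt_15 (t : ℂ) (ht0 : t ≠ 0) (ht1 : t ≠ 1) :
    {B : M3 ℂ | ∃ P Q : M3 ℂ, inU3 P ∧ inU3 Q ∧ P * Q = 1 ∧
        B = P * !![t, 0, 0; 0, 1, 0; 0, 0, 1] * Q} =
      {B : M3 ℂ | ∃ b c : ℂ, B = !![t, b, c; 0, 1, 0; 0, 0, 1]} :=
  stmt_15_general t ht1
end

section
/- Let t ∈ ℂ with t ≠ 0 and t ≠ 1. The conjugacy class of the matrix [[t,0,0],[0,1,1],[0,0,1]] in the group Ũ₃(ℂ) is exactly the set of matrices [[t,b,c],[0,1,e],[0,0,1]] with e ≠ 0 (and b, c ∈ ℂ arbitrary). -/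
/-!
Write `P = [[a,b,c],[0,d,e],[0,0,1]]` and `Q = [[a',b',c'],[0,d',e'],[0,0,1]]`. From `P Q = 1`
we get `a a' = d d' = 1` and `d e' = -e`, so `P [[t,0,0],[0,1,1],[0,0,1]] Q` has diagonal
`(t,1,1)` and `(2,3)`-entry `d ≠ 0`. Conversely every `[[t,b,c],[0,1,e],[0,0,1]]` with `e ≠ 0`
is reached by a conjugator of the form `[[1,p,q],[0,e,0],[0,0,1]]`.
-/

open Matrix

section UpperTriangular

variable {R : Type*} [CommRing R]

theorem upperTriangular_mul (a b c d e a' b' c' d' e' : R) :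
    !![a, b, c; 0, d, e; 0, 0, 1] * !![a', b', c'; 0, d', e'; 0, 0, 1] =
      !![a * a', a * b' + b * d', a * c' + b * e' + c; 0, d * d', d * e' + e; 0, 0, 1] := by
  simp [add_assoc]

theorem upperTriangular_inj {a b c d e a' b' c' d' e' : R} :
    !![a, b, c; 0, d, e; 0, 0, 1] = !![a', b', c'; 0, d', e'; 0, 0, 1] ↔
      a = a' ∧ b = b' ∧ c = c' ∧ d = d' ∧ e = e' := by
  simp [and_assoc]

end UpperTriangular

section Field

variable {F : Type*} [Field F]

theorem inU3_iff_exists {A : M3 F} :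
    inU3 A ↔ ∃ a b c d e : F, a ≠ 0 ∧ d ≠ 0 ∧ A = !![a, b, c; 0, d, e; 0, 0, 1] := by
  constructor
  · rintro ⟨ha, hd, h22, h10, h20, h21⟩
    refine ⟨A 0 0, A 0 1, A 0 2, A 1 1, A 1 2, ha, hd, ?_⟩
    conv_lhs => rw [eta_fin_three A, h22, h10, h20, h21]
  · rintro ⟨a, b, c, d, e, ha, hd, rfl⟩
    simp [inU3, ha, hd]

theorem exists_conj_upperTriangular_eq {P Q : M3 F} (hP : inU3 P) (hQ : inU3 Q) (hPQ : P * Q = 1)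
    (α β γ ε : F) :
    ∃ β' γ' : F, P * !![α, β, γ; 0, 1, ε; 0, 0, 1] * Q =
      !![α, β', γ'; 0, 1, P 1 1 * ε; 0, 0, 1] := by
  obtain ⟨a, b, c, d, e, -, -, rfl⟩ := inU3_iff_exists.mp hP
  obtain ⟨a', b', c', d', e', -, -, rfl⟩ := inU3_iff_exists.mp hQ
  rw [upperTriangular_mul, one_fin_three, upperTriangular_inj] at hPQ
  obtain ⟨haa', -, -, hdd', hde'⟩ := hPQ
  simp only [upperTriangular_mul, upperTriangular_inj, of_apply, cons_val', cons_val_one,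
    cons_val_zero, empty_val', cons_val_fin_one]
  refine ⟨_, _, ?_, rfl, rfl, ?_, ?_⟩
  · linear_combination α * haa'
  · linear_combination hdd'
  · linear_combination hde'

theorem exists_inU3_conj_eq_of_ne_zero {t : F} (ht1 : t ≠ 1) (b c : F) {e : F} (he : e ≠ 0) :
    ∃ P Q : M3 F, inU3 P ∧ inU3 Q ∧ P * Q = 1 ∧
      !![t, b, c; 0, 1, e; 0, 0, 1] = P * !![t, 0, 0; 0, 1, 1; 0, 0, 1] * Q := by
  have h1t : 1 - t ≠ 0 := sub_ne_zero.mpr ht1.symm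
  -- `p` and `q` solve `(1 - t) p = b e` and `p + (1 - t) q = c`, the `(1,2)`- and `(1,3)`-entries
  -- of `P [[t,0,0],[0,1,1],[0,0,1]] = [[t,b,c],[0,1,e],[0,0,1]] P`.
  set p := b * e / (1 - t)
  set q := (c - p) / (1 - t)
  refine ⟨!![1, p, q; 0, e, 0; 0, 0, 1], !![1, -p / e, -q; 0, e⁻¹, 0; 0, 0, 1],
    inU3_iff_exists.mpr ⟨_, _, _, _, _, one_ne_zero, he, rfl⟩,
    inU3_iff_exists.mpr ⟨_, _, _, _, _, one_ne_zero, inv_ne_zero he, rfl⟩, ?_, ?_⟩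
  · rw [upperTriangular_mul, one_fin_three, upperTriangular_inj]
    refine ⟨by ring, by rw [div_eq_mul_inv]; ring, by ring, mul_inv_cancel₀ he, by ring⟩
  · rw [upperTriangular_mul, upperTriangular_mul, upperTriangular_inj]
    refine ⟨by ring, ?_, ?_, by field_simp, by ring⟩
    · simp only [p]; field_simp; ring
    · simp only [q]; field_simp; ring

end Field

theorem stmt_16_general (t : ℂ) (ht1 : t ≠ 1) :
    {B : M3 ℂ | ∃ P Q : M3 ℂ, inU3 P ∧ inU3 Q ∧ P * Q = 1 ∧
        B = P * !![t, 0, 0; 0, 1, 1; 0, 0, 1] * Q} =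
      {B : M3 ℂ | ∃ b c e : ℂ, e ≠ 0 ∧ B = !![t, b, c; 0, 1, e; 0, 0, 1]} := by
  ext B
  constructor
  · rintro ⟨P, Q, hP, hQ, hPQ, rfl⟩
    obtain ⟨b, c, hB⟩ := exists_conj_upperTriangular_eq hP hQ hPQ t 0 0 1
    rw [mul_one] at hB
    exact ⟨b, c, P 1 1, hP.2.1, hB⟩
  · rintro ⟨b, c, e, he, rfl⟩
    exact exists_inU3_conj_eq_of_ne_zero ht1 b c he

theorem stmt_16 (t : ℂ) (ht0 : t ≠ 0) (ht1 : t ≠ 1) :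
    {B : M3 ℂ | ∃ P Q : M3 ℂ, inU3 P ∧ inU3 Q ∧ P * Q = 1 ∧
        B = P * !![t, 0, 0; 0, 1, 1; 0, 0, 1] * Q} =
      {B : M3 ℂ | ∃ b c e : ℂ, e ≠ 0 ∧ B = !![t, b, c; 0, 1, e; 0, 0, 1]} :=
  stmt_16_general t ht1
end

section
/- Let t ∈ ℂ with t ≠ 0 and t ≠ 1. The conjugacy class of the diagonal matrix diag(t, t, 1) in the group Ũ₃(ℂ) is exactly the set of matrices [[t,0,c],[0,t,e],[0,0,1]] with c, e ∈ ℂ arbitrary. -/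
open Matrix

theorem stmt_17 (t : ℂ) (ht0 : t ≠ 0) (ht1 : t ≠ 1) :
    {B : M3 ℂ | ∃ P Q : M3 ℂ, inU3 P ∧ inU3 Q ∧ P * Q = 1 ∧
        B = P * !![t, 0, 0; 0, t, 0; 0, 0, 1] * Q} =
      {B : M3 ℂ | ∃ c e : ℂ, B = !![t, 0, c; 0, t, e; 0, 0, 1]} := by
  have h1t : (1 : ℂ) - t ≠ 0 := sub_ne_zero.mpr (Ne.symm ht1)
  ext B
  simp only [Set.mem_setOf_eq]
  constructor
  · rintro ⟨P, Q, hP, hQ, hPQ, rfl⟩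
    obtain ⟨-, -, hP22, -, -, -⟩ := hP
    obtain ⟨-, -, hQ22, -, hQ20, hQ21⟩ := hQ
    refine ⟨(1 - t) * P 0 2, (1 - t) * P 1 2, ?_⟩
    have key : ∀ i j : Fin 3,
        P i 0 * Q 0 j + P i 1 * Q 1 j + P i 2 * Q 2 j = if i = j then 1 else 0 := by
      intro i j
      have := congr_fun (congr_fun hPQ i) j
      simpa [Matrix.mul_apply, Fin.sum_univ_three, Matrix.one_apply] using this
    have k00 : P 0 0 * Q 0 0 + P 0 1 * Q 1 0 + P 0 2 * Q 2 0 = 1 := by simpa using key 0 0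
    have k01 : P 0 0 * Q 0 1 + P 0 1 * Q 1 1 + P 0 2 * Q 2 1 = 0 := by simpa using key 0 1
    have k02 : P 0 0 * Q 0 2 + P 0 1 * Q 1 2 + P 0 2 * Q 2 2 = 0 := by simpa using key 0 2
    have k10 : P 1 0 * Q 0 0 + P 1 1 * Q 1 0 + P 1 2 * Q 2 0 = 0 := by simpa using key 1 0
    have k11 : P 1 0 * Q 0 1 + P 1 1 * Q 1 1 + P 1 2 * Q 2 1 = 1 := by simpa using key 1 1
    have k12 : P 1 0 * Q 0 2 + P 1 1 * Q 1 2 + P 1 2 * Q 2 2 = 0 := by simpa using key 1 2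
    have k20 : P 2 0 * Q 0 0 + P 2 1 * Q 1 0 + P 2 2 * Q 2 0 = 0 := by simpa using key 2 0
    have k21 : P 2 0 * Q 0 1 + P 2 1 * Q 1 1 + P 2 2 * Q 2 1 = 0 := by simpa using key 2 1
    have k22 : P 2 0 * Q 0 2 + P 2 1 * Q 1 2 + P 2 2 * Q 2 2 = 1 := by simpa using key 2 2
    ext i j
    fin_cases i <;> fin_cases j <;>
      simp [Matrix.mul_apply, Fin.sum_univ_three, hQ20, hQ21, hQ22, Matrix.vecHead,
        Matrix.vecTail]
    · linear_combination t * k00 - t * P 0 2 * hQ20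
    · linear_combination t * k01 - t * P 0 2 * hQ21
    · linear_combination t * k02 - t * P 0 2 * hQ22
    · linear_combination t * k10 - t * P 1 2 * hQ20
    · linear_combination t * k11 - t * P 1 2 * hQ21
    · linear_combination t * k12 - t * P 1 2 * hQ22
    · linear_combination t * k20 - t * P 2 2 * hQ20
    · linear_combination t * k21 - t * P 2 2 * hQ21
    · linear_combination t * k22 + (1 - t) * hP22 - t * P 2 2 * hQ22
  · rintro ⟨c, e, rfl⟩
    refine ⟨!![1, 0, c / (1 - t); 0, 1, e / (1 - t); 0, 0, 1],
      !![1, 0, -(c / (1 - t)); 0, 1, -(e / (1 - t)); 0, 0, 1], ?_, ?_, ?_, ?_⟩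
    · exact ⟨one_ne_zero, one_ne_zero, by simp [Matrix.vecHead, Matrix.vecTail],
        by simp [Matrix.vecHead, Matrix.vecTail], by simp [Matrix.vecHead, Matrix.vecTail],
        by simp [Matrix.vecHead, Matrix.vecTail]⟩
    · exact ⟨one_ne_zero, one_ne_zero, by simp [Matrix.vecHead, Matrix.vecTail],
        by simp [Matrix.vecHead, Matrix.vecTail], by simp [Matrix.vecHead, Matrix.vecTail],
        by simp [Matrix.vecHead, Matrix.vecTail]⟩
    · ext i j
      fin_cases i <;> fin_cases j <;>
        · simp [Matrix.mul_apply, Fin.sum_univ_three, Matrix.vecHead, Matrix.vecTail,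
            Matrix.one_apply]
          try ring
    · ext i j
      fin_cases i <;> fin_cases j <;>
        · simp [Matrix.mul_apply, Fin.sum_univ_three, Matrix.vecHead, Matrix.vecTail]
          try field_simp
          try ring
end

section
/- Let t ∈ ℂ with t ≠ 0 and t ≠ 1. The conjugacy class of the matrix [[t,1,0],[0,t,0],[0,0,1]] in the group Ũ₃(ℂ) is exactly the set of matrices [[t,b,c],[0,t,e],[0,0,1]] with b ≠ 0 (and c, e ∈ ℂ arbitrary). -/
/-!
Write `J = t • 1 + N` with `N = !![0, 1, 0; 0, 0, 0; 0, 0, 1 - t]`. For upper triangular `P, Q`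
with `P * Q = 1` we get `P * J * Q = t • 1 + P * N * Q`, and `P * N * Q` is strictly upper
triangular apart from its corner `1 - t`, with `(0,1)` entry `P 0 0 * Q 1 1 ≠ 0`. Conversely,
conjugating `J` by `!![b, 0, r; 0, 1, u; 0, 0, 1]` produces the `(0,1)` entry `b` and the last
column `((1 - t) * r - b * u, (1 - t) * u)`, which takes every value when `t ≠ 1`.
-/

open Matrix

variable {F : Type*} [Field F]

theorem jordan_eq_smul_one_add (t : F) :
    !![t, 1, 0; 0, t, 0; 0, 0, 1] = t • (1 : M3 F) + !![0, 1, 0; 0, 0, 0; 0, 0, 1 - t] := by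
  ext i j
  fin_cases i <;> fin_cases j <;> simp [one_apply]

theorem inU3.mul_jordanPart_mul {P Q : M3 F} (hP : inU3 P) (hQ : inU3 Q) (s : F) :
    P * !![0, 1, 0; 0, 0, 0; 0, 0, s] * Q =
      !![0, P 0 0 * Q 1 1, P 0 0 * Q 1 2 + s * P 0 2; 0, 0, s * P 1 2; 0, 0, s] := by
  obtain ⟨-, -, hP22, hP10, hP20, hP21⟩ := hP
  obtain ⟨-, -, hQ22, hQ10, hQ20, hQ21⟩ := hQ
  ext i j
  fin_cases i <;> fin_cases j <;>
    simp [mul_apply, Fin.sum_univ_three, hP22, hP10, hP20, hP21, hQ22, hQ10, hQ20, hQ21] <;>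
    ring

theorem inU3.conj_jordan_eq {P Q : M3 F} (hP : inU3 P) (hQ : inU3 Q) (hPQ : P * Q = 1)
    (t : F) :
    P * !![t, 1, 0; 0, t, 0; 0, 0, 1] * Q =
      !![t, P 0 0 * Q 1 1, P 0 0 * Q 1 2 + (1 - t) * P 0 2; 0, t, (1 - t) * P 1 2; 0, 0, 1] := by
  rw [jordan_eq_smul_one_add, Matrix.mul_add, Matrix.add_mul, Matrix.mul_smul, Matrix.mul_one,
    Matrix.smul_mul, hPQ, hP.mul_jordanPart_mul hQ]
  ext i j
  fin_cases i <;> fin_cases j <;> simp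

theorem inU3_affine {b : F} (hb : b ≠ 0) (r u : F) : inU3 !![b, 0, r; 0, 1, u; 0, 0, 1] :=
  ⟨hb, one_ne_zero, rfl, rfl, rfl, rfl⟩

theorem affine_mul_affine_inv {b : F} (hb : b ≠ 0) (r u : F) :
    !![b, 0, r; 0, 1, u; 0, 0, 1] * !![b⁻¹, 0, -(r / b); 0, 1, -u; 0, 0, 1] = 1 := by
  ext i j
  fin_cases i <;> fin_cases j <;>
    simp [mul_apply, Fin.sum_univ_three, one_apply, hb, mul_div_cancel₀]

theorem exists_conj_jordan_eq {t : F} (ht : t ≠ 1) {b : F} (hb : b ≠ 0) (c e : F) :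
    ∃ P Q : M3 F, inU3 P ∧ inU3 Q ∧ P * Q = 1 ∧
      !![t, b, c; 0, t, e; 0, 0, 1] = P * !![t, 1, 0; 0, t, 0; 0, 0, 1] * Q := by
  have h1t : 1 - t ≠ 0 := sub_ne_zero.mpr ht.symm
  set u := e / (1 - t)
  set r := (c + b * u) / (1 - t)
  have hP := inU3_affine hb r u
  have hQ : inU3 !![b⁻¹, 0, -(r / b); 0, 1, -u; 0, 0, 1] := inU3_affine (inv_ne_zero hb) _ _
  have hPQ := affine_mul_affine_inv hb r u
  refine ⟨_, _, hP, hQ, hPQ, ?_⟩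
  have he : (1 - t) * u = e := mul_div_cancel₀ e h1t
  have hc : b * -u + (1 - t) * r = c := by
    rw [mul_div_cancel₀ _ h1t]
    ring
  rw [hP.conj_jordan_eq hQ hPQ]
  simp [← hc, ← he]

theorem stmt_18_general (t : ℂ) (ht1 : t ≠ 1) :
    {B : M3 ℂ | ∃ P Q : M3 ℂ, inU3 P ∧ inU3 Q ∧ P * Q = 1 ∧
        B = P * !![t, 1, 0; 0, t, 0; 0, 0, 1] * Q} =
      {B : M3 ℂ | ∃ b c e : ℂ, b ≠ 0 ∧ B = !![t, b, c; 0, t, e; 0, 0, 1]} := by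
  ext B
  constructor
  · rintro ⟨P, Q, hP, hQ, hPQ, rfl⟩
    exact ⟨_, _, _, mul_ne_zero hP.1 hQ.2.1, hP.conj_jordan_eq hQ hPQ t⟩
  · rintro ⟨b, c, e, hb, rfl⟩
    exact exists_conj_jordan_eq ht1 hb c e

theorem stmt_18 (t : ℂ) (ht0 : t ≠ 0) (ht1 : t ≠ 1) :
    {B : M3 ℂ | ∃ P Q : M3 ℂ, inU3 P ∧ inU3 Q ∧ P * Q = 1 ∧
        B = P * !![t, 1, 0; 0, t, 0; 0, 0, 1] * Q} =
      {B : M3 ℂ | ∃ b c e : ℂ, b ≠ 0 ∧ B = !![t, b, c; 0, t, e; 0, 0, 1]} :=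
  stmt_18_general t ht1
end
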